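/- arXiv:2601.20469 — 3 statements merged into one kernel-verified Lean document; each statement's English description precedes it below -/
import Mathlib

section
/- Let T > 0, let (Ω, 𝔉, P) be a probability space, and let V : [0,T] × Ω → ℝ be a jointly measurable stochastic process whose empirical distribution function F_T(x)(ω) = (1/T)·Leb{t ∈ [0,T] : V_t(ω) ≤ x} is, for P-almost every ω, a continuous function of x ∈ ℝ. For each n let V̂ⁿ : [0,T] × Ω → ℝ be jointly measurable and suppose that for every t ∈ [0,T], V̂ⁿ_t → V_t in probability as n → ∞. Then the realized empirical distribution functions F_{n,T}(x) = (1/T)·Leb{t ∈ [0,T] : V̂ⁿ_t ≤ x} satisfy sup_{x ∈ ℝ₊} |F_{n,T}(x) − F_T(x)| → 0 in probability as n → ∞. -/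
open MeasureTheory ProbabilityTheory Filter Topology Set Function
open scoped ENNReal symmDiff

/-!
Both EDFs are cdfs of occupation measures: `F_T(x) = cdf (Leb_T ∘ V(·, ω)⁻¹) x` for the
uniform law `Leb_T = volume[|Icc 0 T]`, and likewise for `V̂ⁿ`. At a fixed level `x` they differ
by at most the occupation time of `{V̂ⁿ ≤ x} ∆ {V ≤ x}`, whose mean is the `Leb_T ⊗ P`-measure of
that set. This tends to zero because `V̂ⁿ → V` in `Leb_T ⊗ P`-measure (dominated convergence in
`t`) and `{V = x}` is `Leb_T ⊗ P`-null (continuity of `F_T` excludes atoms). Uniformity in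
`x ≥ 0` is Pólya's argument: both EDFs are monotone and bounded by `1`, so off a fixed grid they
are sandwiched between grid values; a.s. continuity of `F_T` and `F_T(∞) = 1` make the grid of
mesh `1/(k+1)` on `[0, k+1]` fine enough for large `k`, outside an event of small probability.
-/

theorem ENNReal.tendsto_nhds_zero_of_eventually_le_add {α ι : Type*} {f : Filter α}
    {l : Filter ι} [l.NeBot] {u : α → ℝ≥0∞} {a : ι → α → ℝ≥0∞} {b : ι → ℝ≥0∞}
    (ha : ∀ᶠ i in l, Tendsto (a i) f (𝓝 0)) (hb : Tendsto b l (𝓝 0))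
    (hu : ∀ᶠ i in l, ∀ᶠ x in f, u x ≤ a i x + b i) : Tendsto u f (𝓝 0) := by
  rw [ENNReal.tendsto_nhds_zero] at hb ⊢
  intro ε hε
  have hε2 : 0 < ε / 2 := ENNReal.half_pos hε.ne'
  obtain ⟨i, hbi, hai, hui⟩ := ((hb _ hε2).and (ha.and hu)).exists
  filter_upwards [hui, ENNReal.tendsto_nhds_zero.1 hai _ hε2] with x hux hax
  calc u x ≤ a i x + b i := hux
    _ ≤ ε / 2 + ε / 2 := add_le_add hax hbi
    _ = ε := ENNReal.add_halves ε

theorem measure_singleton_eq_zero_of_continuousAt_cdf {ν : Measure ℝ} [IsProbabilityMeasure ν]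
    {x : ℝ} (h : ContinuousAt (cdf ν) x) : ν {x} = 0 := by
  rw [← measure_cdf ν, StieltjesFunction.measure_singleton,
    leftLim_eq_of_tendsto (h.tendsto.mono_left nhdsWithin_le_nhds), sub_self, ENNReal.ofReal_zero]

theorem cdf_map_eq_measureReal {τ : Type*} [MeasurableSpace τ] {μ : Measure τ}
    [IsProbabilityMeasure μ] {f : τ → ℝ} (hf : Measurable f) (x : ℝ) :
    cdf (μ.map f) x = μ.real {t | f t ≤ x} := by
  have := Measure.isProbabilityMeasure_map (μ := μ) hf.aemeasurable
  rw [cdf_eq_real, map_measureReal_apply hf measurableSet_Iic]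
  rfl

theorem MeasureTheory.TendstoInMeasure.tendsto_measure_symmDiff_setOf_le {α ι : Type*}
    [MeasurableSpace α] {m : Measure α} [IsFiniteMeasure m] {l : Filter ι} {f : ι → α → ℝ}
    {g : α → ℝ} (hfg : TendstoInMeasure m f l g) (hg : Measurable g) {x : ℝ}
    (hx : m {a | g a = x} = 0) :
    Tendsto (fun i => m ({a | f i a ≤ x} ∆ {a | g a ≤ x})) l (𝓝 0) := by
  have hball : Tendsto (fun δ => m (g ⁻¹' Metric.closedBall x δ)) (𝓝[>] 0) (𝓝 0) := by
    have := tendsto_measure_biInter_gt (μ := m) (a := (0 : ℝ))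
      (s := fun δ => g ⁻¹' Metric.closedBall x δ)
      (fun δ _ => (hg measurableSet_closedBall).nullMeasurableSet)
      (fun _ _ _ hδ => preimage_mono (Metric.closedBall_subset_closedBall hδ))
      ⟨1, one_pos, measure_ne_top _ _⟩
    rw [← preimage_iInter₂, Metric.biInter_gt_closedBall, Metric.closedBall_zero] at this
    exact hx ▸ this
  refine ENNReal.tendsto_nhds_zero_of_eventually_le_add (l := 𝓝[>] (0 : ℝ))
    (eventually_mem_nhdsWithin.mono fun δ hδ => tendstoInMeasure_iff_dist.1 hfg δ hδ) hball
    (Eventually.of_forall fun δ => Eventually.of_forall fun i => ?_)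
  refine (measure_mono fun a ha => ?_).trans (measure_union_le _ _)
  -- if `f i a` and `g a` lie on opposite sides of `x` and are `δ`-close, then `|g a - x| ≤ δ`
  by_contra hout
  simp only [mem_union, mem_ofPred_eq, mem_preimage, Metric.mem_closedBall, Real.dist_eq, not_or,
    not_le] at hout
  obtain ⟨hclose, hfar⟩ := hout
  rw [abs_sub_lt_iff] at hclose
  simp only [mem_symmDiff, mem_ofPred_eq, not_le] at ha
  rcases lt_abs.1 hfar with hfar | hfar <;> rcases ha with ⟨h₁, h₂⟩ | ⟨h₁, h₂⟩ <;> linarith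

section Processes

variable {τ Ω : Type*} [MeasurableSpace τ] [MeasurableSpace Ω] {μ : Measure τ} {P : Measure Ω}

theorem tendstoInMeasure_prod_uncurry [IsFiniteMeasure μ] [IsFiniteMeasure P] {E : Type*}
    [PseudoEMetricSpace E] [MeasurableSpace E] [OpensMeasurableSpace E] [SecondCountableTopology E]
    {X : τ → Ω → E} {Xn : ℕ → τ → Ω → E} (hX : Measurable (uncurry X))
    (hXn : ∀ n, Measurable (uncurry (Xn n)))
    (hconv : ∀ᵐ t ∂μ, TendstoInMeasure P (fun n => Xn n t) atTop (X t)) :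
    TendstoInMeasure (μ.prod P) (fun n => uncurry (Xn n)) atTop (uncurry X) := by
  intro ε hε
  have hmeas : ∀ n, MeasurableSet {p | ε ≤ edist (uncurry (Xn n) p) (uncurry X p)} :=
    fun n => measurableSet_le measurable_const ((hXn n).edist hX)
  simp_rw [Measure.prod_apply (hmeas _)]
  simpa using tendsto_lintegral_of_dominated_convergence (fun _ => P univ)
    (fun n => measurable_measure_prodMk_left (hmeas n))
    (fun n => ae_of_all _ fun t => measure_mono (subset_univ _)) (by simp [ENNReal.mul_eq_top])
    (hconv.mono fun t ht => ht ε hε)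

theorem measure_prod_setOf_eq_eq_zero [IsProbabilityMeasure μ] [SFinite P] {X : τ → Ω → ℝ}
    (hX : Measurable (uncurry X)) {x : ℝ} (hcont : ∀ᵐ ω ∂P, ContinuousAt (cdf (μ.map (X · ω))) x) :
    (μ.prod P) {p | uncurry X p = x} = 0 := by
  have hmeas : MeasurableSet {p | uncurry X p = x} := measurableSet_eq_fun hX measurable_const
  rw [Measure.prod_apply_symm hmeas, lintegral_eq_zero_iff (measurable_measure_prodMk_right hmeas)]
  filter_upwards [hcont] with ω hω
  have hXω : Measurable (X · ω) := hX.of_uncurry_right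
  have := Measure.isProbabilityMeasure_map (μ := μ) hXω.aemeasurable
  have := measure_singleton_eq_zero_of_continuousAt_cdf hω
  rwa [Measure.map_apply hXω (measurableSet_singleton x)] at this

theorem tendsto_measure_le_abs_cdf_map_sub [IsProbabilityMeasure μ] [IsFiniteMeasure P]
    {X : τ → Ω → ℝ} {Xn : ℕ → τ → Ω → ℝ} (hX : Measurable (uncurry X))
    (hXn : ∀ n, Measurable (uncurry (Xn n)))
    (hconv : TendstoInMeasure (μ.prod P) (fun n => uncurry (Xn n)) atTop (uncurry X)) {x : ℝ}
    (hx : (μ.prod P) {p | uncurry X p = x} = 0) {c : ℝ} (hc : 0 < c) :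
    Tendsto (fun n => P {ω | c ≤ |cdf (μ.map (Xn n · ω)) x - cdf (μ.map (X · ω)) x|})
      atTop (𝓝 0) := by
  set S : ℕ → Set (τ × Ω) := fun n => {p | uncurry (Xn n) p ≤ x} ∆ {p | uncurry X p ≤ x}
  have hS : ∀ n, MeasurableSet (S n) := fun n =>
    (measurableSet_le (hXn n) measurable_const).symmDiff (measurableSet_le hX measurable_const)
  have hc' : ENNReal.ofReal c ≠ 0 := by simpa using hc
  have hmarkov : ∀ n, P {ω | c ≤ |cdf (μ.map (Xn n · ω)) x - cdf (μ.map (X · ω)) x|}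
      ≤ (μ.prod P) (S n) / ENNReal.ofReal c := by
    intro n
    rw [Measure.prod_apply_symm (hS n)]
    refine (measure_mono fun ω hω => ?_).trans
      (meas_ge_le_lintegral_div (measurable_measure_prodMk_right (hS n)).aemeasurable hc'
        ENNReal.ofReal_ne_top)
    rw [mem_ofPred_eq, cdf_map_eq_measureReal (hXn n).of_uncurry_right,
      cdf_map_eq_measureReal hX.of_uncurry_right] at hω
    exact ENNReal.ofReal_le_of_le_toReal (hω.trans (abs_measureReal_sub_le_measureReal_symmDiff
      ((measurableSet_le (hXn n).of_uncurry_right measurable_const).nullMeasurableSet)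
      ((measurableSet_le hX.of_uncurry_right measurable_const).nullMeasurableSet)))
  have hlim : Tendsto (fun n => (μ.prod P) (S n) / ENNReal.ofReal c) atTop (𝓝 0) := by
    simpa using ENNReal.Tendsto.div_const
      (hconv.tendsto_measure_symmDiff_setOf_le hX hx) (Or.inr hc')
  exact tendsto_of_tendsto_of_tendsto_of_le_of_le tendsto_const_nhds hlim (fun _ => zero_le)
    hmarkov

def GridOscillationLE (F : ℝ → ℝ) (h : ℝ) (K : ℕ) (a : ℝ) : Prop :=
  (∀ j < K, F ((j + 1) * h) - F (j * h) ≤ a) ∧ 1 - F (K * h) ≤ a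

theorem abs_sub_le_of_gridOscillationLE {F G : ℝ → ℝ} (hF : Monotone F) (hG : Monotone G)
    (hF1 : ∀ y, F y ≤ 1) (hG1 : ∀ y, G y ≤ 1) {h a : ℝ} (hh : 0 < h) {K : ℕ}
    (hosc : GridOscillationLE F h K a) (hgrid : ∀ j ≤ K, |G (j * h) - F (j * h)| ≤ a)
    {x : ℝ} (hx : 0 ≤ x) : |G x - F x| ≤ 2 * a := by
  obtain ⟨hstep, htail⟩ := hosc
  rw [abs_le]
  by_cases hxK : K * h ≤ x
  · have hK := abs_le.1 (hgrid K le_rfl)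
    constructor <;> linarith [hF hxK, hG hxK, hF1 x, hG1 x, abs_nonneg (G 0 - F 0)]
  · set j := ⌊x / h⌋₊
    have hjx : j * h ≤ x := (le_div_iff₀ hh).1 (Nat.floor_le (div_nonneg hx hh.le))
    have hxj : x ≤ (j + 1) * h := ((div_le_iff₀ hh).1 (Nat.lt_floor_add_one _).le)
    have hjK : j < K := by
      by_contra! hKj
      exact hxK ((mul_le_mul_of_nonneg_right (by exact_mod_cast hKj) hh.le).trans hjx)
    have h0 := abs_le.1 (hgrid j hjK.le)
    have h1 := abs_le.1 (hgrid (j + 1) hjK)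
    push_cast at h1
    constructor <;> linarith [hF hjx, hF hxj, hG hjx, hG hxj, hstep j hjK]

theorem eventually_gridOscillationLE {F : ℝ → ℝ} (hF1 : ∀ y, F y ≤ 1)
    (hFc : Continuous F) (hlim : Tendsto F atTop (𝓝 1)) {a : ℝ} (ha : 0 < a) :
    ∀ᶠ k : ℕ in atTop, GridOscillationLE F ((k : ℝ) + 1)⁻¹ ((k + 1) ^ 2) a := by
  obtain ⟨M, hM⟩ :=
    (hlim.eventually (eventually_gt_nhds (by linarith : 1 - a < 1))).exists_forall_of_atTop
  obtain ⟨δ, hδ, hFδ⟩ := Metric.uniformContinuousOn_iff.1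
    (isCompact_Icc.uniformContinuousOn_of_continuous (s := Icc 0 (M + 1)) hFc.continuousOn) a ha
  obtain ⟨N, hN⟩ := exists_nat_one_div_lt hδ
  filter_upwards [eventually_ge_atTop N, tendsto_natCast_atTop_atTop.eventually_ge_atTop M]
    with k hkN hkM
  -- cells below `M + 1` are controlled by uniform continuity, cells above `M` by `1 - a < F`
  have hk : (0 : ℝ) < k + 1 := by positivity
  have hh : ((k : ℝ) + 1)⁻¹ < δ := by
    refine lt_of_le_of_lt ?_ hN
    rw [one_div]
    gcongr
  have hh1 : ((k : ℝ) + 1)⁻¹ ≤ 1 := inv_le_one_of_one_le₀ (by linarith [k.cast_nonneg (α := ℝ)])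
  refine ⟨fun j _ => ?_, ?_⟩
  · by_cases hj : (j + 1) * ((k : ℝ) + 1)⁻¹ ≤ M + 1
    · have hj0 : (j : ℝ) * ((k : ℝ) + 1)⁻¹ ∈ Icc 0 (M + 1) :=
        ⟨by positivity, le_trans (by gcongr; linarith) hj⟩
      have hj1 : ((j : ℝ) + 1) * ((k : ℝ) + 1)⁻¹ ∈ Icc 0 (M + 1) := ⟨by positivity, hj⟩
      have := hFδ _ hj1 _ hj0 (by
        rwa [Real.dist_eq, ← sub_mul, add_sub_cancel_left, one_mul, abs_of_pos (inv_pos.2 hk)])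
      exact (le_abs_self _).trans (Real.dist_eq _ _ ▸ this).le
    · have := hM (j * ((k : ℝ) + 1)⁻¹) (by nlinarith)
      linarith [hF1 ((j + 1) * ((k : ℝ) + 1)⁻¹)]
  · have : (((k + 1) ^ 2 : ℕ) : ℝ) * ((k : ℝ) + 1)⁻¹ = k + 1 := by
      push_cast
      field_simp
    rw [this]
    linarith [hM (k + 1) (by linarith)]

theorem measurable_cdf_map [IsProbabilityMeasure μ] {X : τ → Ω → ℝ}
    (hX : Measurable (uncurry X)) (x : ℝ) : Measurable fun ω => cdf (μ.map (X · ω)) x := by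
  simp_rw [cdf_map_eq_measureReal hX.of_uncurry_right, measureReal_def]
  exact (measurable_measure_prodMk_right (measurableSet_le hX measurable_const)).ennreal_toReal

theorem measurableSet_gridOscillationLE {F : ℝ → Ω → ℝ} (hF : ∀ x, Measurable (F x)) (h : ℝ)
    (K : ℕ) (a : ℝ) : MeasurableSet {ω | GridOscillationLE (F · ω) h K a} := by
  simp only [GridOscillationLE, ofPred_and, ofPred_forall]
  exact (MeasurableSet.iInter fun j => MeasurableSet.iInter fun _ =>
    measurableSet_le ((hF _).sub (hF _)) measurable_const).inter
    (measurableSet_le (measurable_const.sub (hF _)) measurable_const)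

theorem tendsto_measure_le_iSup_abs_cdf_map_sub [IsProbabilityMeasure μ] [IsFiniteMeasure P]
    {X : τ → Ω → ℝ} {Xn : ℕ → τ → Ω → ℝ} (hX : Measurable (uncurry X))
    (hXn : ∀ n, Measurable (uncurry (Xn n)))
    (hconv : ∀ᵐ t ∂μ, TendstoInMeasure P (fun n => Xn n t) atTop (X t))
    (hcont : ∀ᵐ ω ∂P, Continuous (cdf (μ.map (X · ω)))) {ε : ℝ} (hε : 0 < ε) :
    Tendsto (fun n => P {ω | ε ≤ ⨆ x : {x : ℝ // 0 ≤ x},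
      |cdf (μ.map (Xn n · ω)) x - cdf (μ.map (X · ω)) x|}) atTop (𝓝 0) := by
  have hbad : Tendsto (fun k : ℕ => P {ω | GridOscillationLE (cdf (μ.map (X · ω)))
      ((k : ℝ) + 1)⁻¹ ((k + 1) ^ 2) (ε / 4)}ᶜ) atTop (𝓝 0) := by
    simpa using tendsto_measure_of_ae_tendsto_indicator_of_isFiniteMeasure atTop
      MeasurableSet.empty
      (fun k => (measurableSet_gridOscillationLE (measurable_cdf_map hX) _ _ _).compl)
      (hcont.mono fun ω hω => (eventually_gridOscillationLE (cdf_le_one _) hω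
        (tendsto_cdf_atTop _) (a := ε / 4) (by positivity)).mono fun k hk => by simpa using hk)
  have hgrid (k j : ℕ) := tendsto_measure_le_abs_cdf_map_sub hX hXn
    (tendstoInMeasure_prod_uncurry hX hXn hconv)
    (measure_prod_setOf_eq_eq_zero hX (x := j * ((k : ℝ) + 1)⁻¹)
      (hcont.mono fun _ hω => hω.continuousAt)) (c := ε / 4) (by positivity)
  refine ENNReal.tendsto_nhds_zero_of_eventually_le_add (l := atTop)
    (Eventually.of_forall fun k => by
      simpa using tendsto_finsetSum (Finset.range ((k + 1) ^ 2 + 1)) fun j _ => hgrid k j)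
    hbad (Eventually.of_forall fun k => Eventually.of_forall fun n => ?_)
  refine (measure_mono ?_).trans ((measure_union_le _ _).trans
    (add_le_add_left (measure_biUnion_finset_le _ _) _))
  intro ω hω
  by_contra hout
  simp only [mem_union, mem_iUnion, not_or, not_exists, mem_compl_iff, not_not] at hout
  simp only [Finset.mem_range, Nat.lt_succ_iff, mem_ofPred_eq, not_le] at hout hω
  have : Nonempty {x : ℝ // 0 ≤ x} := ⟨⟨0, le_rfl⟩⟩
  have hsup := ciSup_le fun x : {x : ℝ // 0 ≤ x} => abs_sub_le_of_gridOscillationLE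
    (monotone_cdf _) (monotone_cdf _) (cdf_le_one _) (cdf_le_one _) (by positivity) hout.2
    (fun j hj => (hout.1 j hj).le) x.2
  linarith

end Processes

theorem edf_eq_cdf_map_cond {T : ℝ} (hT : 0 < T) {f : ℝ → ℝ} (hf : Measurable f) (x : ℝ) :
    (1 / T) * (volume {t ∈ Icc (0 : ℝ) T | f t ≤ x}).toReal
      = cdf ((volume[|Icc (0 : ℝ) T]).map f) x := by
  have : IsProbabilityMeasure (volume[|Icc (0 : ℝ) T]) :=
    cond_isProbabilityMeasure_of_finite (by simp [hT]) (by simp)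
  rw [cdf_map_eq_measureReal hf, measureReal_def, cond_apply measurableSet_Icc, Real.volume_Icc,
    sub_zero, ENNReal.toReal_mul, ENNReal.toReal_inv, ENNReal.toReal_ofReal hT.le, one_div]
  rfl

/-- Consistency of the realized empirical distribution function (conditional/skeleton
form of Theorem 3.1): if the spot-variance estimators converge pointwise in probability
and the true EDF is a.s. continuous, then the realized EDF converges uniformly over
`ℝ₊` in probability. -/
theorem realized_edf_uniformly_consistent
    (T : ℝ) (hT : 0 < T)
    (Ω : Type*) [MeasurableSpace Ω] (P : Measure Ω) [IsProbabilityMeasure P]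
    (V : ℝ → Ω → ℝ)
    (hV : Measurable (Function.uncurry V))
    (FT : ℝ → Ω → ℝ)
    (hFT : ∀ x ω, FT x ω
      = (1 / T) * (volume {t ∈ Set.Icc (0:ℝ) T | V t ω ≤ x}).toReal)
    (hcont : ∀ᵐ ω ∂P, Continuous fun x => FT x ω)
    (Vhat : ℕ → ℝ → Ω → ℝ)
    (hVhat : ∀ n, Measurable (Function.uncurry (Vhat n)))
    (hconv : ∀ t ∈ Set.Icc (0:ℝ) T,
      TendstoInMeasure P (fun n => Vhat n t) atTop (V t))
    (FnT : ℕ → ℝ → Ω → ℝ)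
    (hFnT : ∀ n x ω, FnT n x ω
      = (1 / T) * (volume {t ∈ Set.Icc (0:ℝ) T | Vhat n t ω ≤ x}).toReal) :
    ∀ ε > 0,
      Tendsto
        (fun n => P {ω | ε ≤ ⨆ x : {x : ℝ // 0 ≤ x}, |FnT n x ω - FT x ω|})
        atTop (nhds 0) := by
  intro ε hε
  have : IsProbabilityMeasure (volume[|Icc (0 : ℝ) T]) :=
    cond_isProbabilityMeasure_of_finite (by simp [hT]) (by simp)
  have hF (x : ℝ) (ω : Ω) : FT x ω = cdf ((volume[|Icc (0 : ℝ) T]).map (V · ω)) x :=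
    (hFT x ω).trans (edf_eq_cdf_map_cond hT hV.of_uncurry_right x)
  have hFn (n : ℕ) (x : ℝ) (ω : Ω) :
      FnT n x ω = cdf ((volume[|Icc (0 : ℝ) T]).map (Vhat n · ω)) x :=
    (hFnT n x ω).trans (edf_eq_cdf_map_cond hT (hVhat n).of_uncurry_right x)
  simp only [hF, hFn] at hcont ⊢
  exact tendsto_measure_le_iSup_abs_cdf_map_sub hV hVhat
    ((ae_cond_mem measurableSet_Icc).mono hconv) hcont hε
end

section
/- Let (F_n)_{n∈ℕ} and G be jointly measurable random functions from Ω × ℝ₊ to [0,1] such that for every ω the maps x ↦ F_n(x)(ω) and x ↦ G(x)(ω) are nondecreasing. Assume: (i) for every x ≥ 0, F_n(x) → G(x) in probability as n → ∞; (ii) for P-almost every ω, x ↦ G(x)(ω) is continuous on ℝ₊; and (iii) for every η > 0 there exists M > 0 with P(1 − G(M) > η) < η. Then sup_{x ≥ 0} |F_n(x) − G(x)| → 0 in probability as n → ∞. -/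
/-!
Cut `[0, ∞)` at the grid points `i * M / N`, `i ≤ N`, with `M` given by tightness. On a cell both
paths are monotone, so `|F n x - G x|` is at most the larger error at the two endpoints plus the
increment of `G` across the cell; beyond `M` the values lie in `[F n M, 1]` and `[G M, 1]`, which
costs the error at `M` plus `1 - G M`. The grid errors are finitely many and vanish in probability,
the increments of `G` are uniformly small for large `N` by a.s. uniform continuity on `[0, M]`,
and `1 - G M` is small by the choice of `M`.
-/

open MeasureTheory Filter Set Topology

lemma abs_sub_le_of_mem_Icc {a b c d y z : ℝ} (hy : y ∈ Icc a b) (hz : z ∈ Icc c d) :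
    |y - z| ≤ max |a - c| |b - d| + (d - c) := by
  have hac : c - a ≤ max |a - c| |b - d| :=
    le_max_of_le_left (by rw [abs_sub_comm]; exact le_abs_self _)
  have hbd : b - d ≤ max |a - c| |b - d| := le_max_of_le_right (le_abs_self _)
  rw [abs_sub_le_iff]
  constructor <;> linarith [hy.1, hy.2, hz.1, hz.2]

lemma exists_nat_mul_le_lt_succ_mul {x h : ℝ} (hx : 0 ≤ x) (hh : 0 < h) :
    ∃ i : ℕ, i * h ≤ x ∧ x < (i + 1) * h := by
  refine ⟨⌊x / h⌋₊, ?_, ?_⟩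
  · rw [← le_div_iff₀ hh]
    exact Nat.floor_le (div_nonneg hx hh.le)
  · rw [← div_lt_iff₀ hh]
    exact Nat.lt_floor_add_one _

lemma abs_sub_le_of_grid {f g : ℝ → ℝ} (hf : MonotoneOn f (Ici 0)) (hg : MonotoneOn g (Ici 0))
    (hf1 : ∀ x, 0 ≤ x → f x ≤ 1) (hg1 : ∀ x, 0 ≤ x → g x ≤ 1) {h D O : ℝ} (hh : 0 < h)
    {N : ℕ} (hD : ∀ i ≤ N, |f (i * h) - g (i * h)| ≤ D)
    (hO : ∀ i < N, g ((i + 1) * h) - g (i * h) ≤ O) (hO0 : 0 ≤ O) {x : ℝ} (hx : 0 ≤ x) :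
    |f x - g x| ≤ D + O + (1 - g (N * h)) := by
  have hgrid : ∀ i : ℕ, (0 : ℝ) ≤ i * h := fun i => by positivity
  have htail : 0 ≤ 1 - g (N * h) := sub_nonneg.2 (hg1 _ (hgrid N))
  rcases le_or_gt (N * h) x with hNx | hxN
  · have hD0 : 0 ≤ D := (abs_nonneg _).trans (hD N le_rfl)
    have := abs_sub_le_of_mem_Icc (b := 1) (d := 1)
      ⟨hf (hgrid N) hx hNx, hf1 x hx⟩ ⟨hg (hgrid N) hx hNx, hg1 x hx⟩
    rw [sub_self, abs_zero] at this
    linarith [max_le (hD N le_rfl) hD0]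
  · obtain ⟨i, hix, hxi⟩ := exists_nat_mul_le_lt_succ_mul hx hh
    have hiN : i < N := by
      exact_mod_cast (mul_lt_mul_iff_of_pos_right hh).1 (hix.trans_lt hxN)
    have hsucc : (0 : ℝ) ≤ (i + 1) * h := by positivity
    have := abs_sub_le_of_mem_Icc ⟨hf (hgrid i) hx hix, hf hx hsucc hxi.le⟩
      ⟨hg (hgrid i) hx hix, hg hx hsucc hxi.le⟩
    have hD' := max_le (hD i hiN.le) (hD (i + 1) hiN)
    push_cast at hD'
    linarith [hO i hiN]

lemma eventually_forall_abs_sub_grid_lt {g : ℝ → ℝ} {M : ℝ} (hM : 0 ≤ M)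
    (hg : ContinuousOn g (Icc 0 M)) {r : ℝ} (hr : 0 < r) :
    ∀ᶠ N : ℕ in atTop, ∀ i < N, |g ((i + 1) * (M / N)) - g (i * (M / N))| < r := by
  obtain ⟨d, hd, hgd⟩ :=
    Metric.uniformContinuousOn_iff.1 (isCompact_Icc.uniformContinuousOn_of_continuous hg) r hr
  filter_upwards [(tendsto_const_div_atTop_nhds_zero_nat M).eventually_lt_const hd]
    with N hN i hi
  have hN0 : (0 : ℝ) < N := by exact_mod_cast (Nat.zero_le i).trans_lt hi
  have hmesh : 0 ≤ M / N := by positivity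
  have hsucc : ((i : ℝ) + 1) * (M / N) ≤ M := by
    calc ((i : ℝ) + 1) * (M / N) ≤ N * (M / N) := by
          gcongr; exact_mod_cast hi
      _ = M := mul_div_cancel₀ M hN0.ne'
  have hlt := hgd _ ⟨by positivity, hsucc⟩ (i * (M / N))
    ⟨by positivity, (by nlinarith : (i : ℝ) * (M / N) ≤ ((i : ℝ) + 1) * (M / N)).trans hsucc⟩
    (by rwa [Real.dist_eq, ← sub_mul, add_sub_cancel_left, one_mul, abs_of_nonneg hmesh])
  rwa [Real.dist_eq] at hlt

section Probability

variable {Ω : Type*} [MeasurableSpace Ω] {P : Measure Ω}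

lemma tendsto_measure_biUnion_finset_nhds_zero {ι κ : Type*} {l : Filter κ} (s : Finset ι)
    {E : κ → ι → Set Ω} (hE : ∀ i ∈ s, Tendsto (fun n => P (E n i)) l (𝓝 0)) :
    Tendsto (fun n => P (⋃ i ∈ s, E n i)) l (𝓝 0) := by
  have hsum := tendsto_finsetSum s hE
  rw [Finset.sum_const_zero] at hsum
  exact tendsto_of_tendsto_of_tendsto_of_le_of_le tendsto_const_nhds hsum
    (fun _ => zero_le) (fun n => measure_biUnion_finset_le s _)

lemma exists_measure_lt_of_tight {Y : ℝ → Ω → ℝ}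
    (htight : ∀ η > (0:ℝ), ∃ M > (0:ℝ), P {ω | η < 1 - Y M ω} < ENNReal.ofReal η)
    {ε : ℝ} (hε : 0 < ε) {δ : ENNReal} (hδ : 0 < δ) :
    ∃ M > (0:ℝ), P {ω | ε ≤ 1 - Y M ω} < δ := by
  obtain ⟨η, -, hη0, hη⟩ := ENNReal.lt_iff_exists_real_btwn.1
    (lt_min hδ (ENNReal.ofReal_pos.2 hε))
  obtain ⟨M, hM, hMη⟩ := htight η (ENNReal.ofReal_pos.1 hη0)
  have hηε : η < ε := (ENNReal.ofReal_lt_ofReal_iff hε).1 (hη.trans_le (min_le_right _ _))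
  have hsub : {ω | ε ≤ 1 - Y M ω} ⊆ {ω | η < 1 - Y M ω} := fun ω hω => hηε.trans_le hω
  exact ⟨M, hM, (measure_mono hsub).trans_lt (hMη.trans (hη.trans_le (min_le_left _ _)))⟩

lemma tendsto_measure_grid_oscillation_nhds_zero [IsFiniteMeasure P] {G : ℝ → Ω → ℝ}
    (hG : ∀ x, Measurable (G x)) (hcont : ∀ᵐ ω ∂P, ContinuousOn (fun x => G x ω) (Ici 0))
    {M : ℝ} (hM : 0 ≤ M) {r : ℝ} (hr : 0 < r) :
    Tendsto (fun N : ℕ => P (⋃ i ∈ Finset.range N,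
      {ω | r ≤ |G ((i + 1) * (M / N)) ω - G (i * (M / N)) ω|})) atTop (𝓝 0) := by
  have hmeas : ∀ N : ℕ, MeasurableSet (⋃ i ∈ Finset.range N,
      {ω | r ≤ |G ((i + 1) * (M / N)) ω - G (i * (M / N)) ω|}) := fun N =>
    Finset.measurableSet_biUnion _ fun i _ => measurableSet_le measurable_const (by fun_prop)
  simpa using tendsto_measure_of_ae_tendsto_indicator_of_isFiniteMeasure atTop
    MeasurableSet.empty hmeas (by
      filter_upwards [hcont] with ω hω
      filter_upwards [eventually_forall_abs_sub_grid_lt hM (hω.mono Icc_subset_Ici_self) hr]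
        with N hN
      simpa using fun i hi => hN i hi)

end Probability

theorem monotone_pointwise_to_uniform_in_probability_general
    (Ω : Type*) [MeasurableSpace Ω] (P : Measure Ω) [IsProbabilityMeasure P]
    (F : ℕ → ℝ → Ω → ℝ) (G : ℝ → Ω → ℝ)
    (hGmeas : Measurable fun p : ℝ × Ω => G p.1 p.2)
    (hFrange : ∀ n x ω, 0 ≤ x → F n x ω ∈ Set.Icc (0:ℝ) 1)
    (hGrange : ∀ x ω, 0 ≤ x → G x ω ∈ Set.Icc (0:ℝ) 1)
    (hFmono : ∀ n ω, MonotoneOn (fun x => F n x ω) (Set.Ici (0:ℝ)))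
    (hGmono : ∀ ω, MonotoneOn (fun x => G x ω) (Set.Ici (0:ℝ)))
    (hconv : ∀ x ≥ (0:ℝ), TendstoInMeasure P (fun n => F n x) atTop (G x))
    (hcont : ∀ᵐ ω ∂P, ContinuousOn (fun x => G x ω) (Set.Ici (0:ℝ)))
    (htight : ∀ η > (0:ℝ), ∃ M > (0:ℝ),
      P {ω | η < 1 - G M ω} < ENNReal.ofReal η) :
    ∀ ε > 0,
      Tendsto
        (fun n => P {ω | ε ≤ ⨆ x : {x : ℝ // 0 ≤ x}, |F n x ω - G x ω|})
        atTop (nhds 0) := by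
  intro ε hε
  rw [ENNReal.tendsto_nhds_zero]
  intro δ hδ
  have hε3 : 0 < ε / 3 := by positivity
  have hδ3 : 0 < δ / 3 := ENNReal.div_pos hδ.ne' ENNReal.ofNat_ne_top
  obtain ⟨M, hM, hC⟩ := exists_measure_lt_of_tight htight hε3 hδ3
  have hGx : ∀ x, Measurable (G x) := fun x => hGmeas.comp measurable_prodMk_left
  obtain ⟨N, hB, hN⟩ := ((tendsto_measure_grid_oscillation_nhds_zero hGx hcont hM.le hε3
    |>.eventually_lt_const hδ3).and (eventually_gt_atTop 0)).exists
  set h := M / N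
  have hNh : N * h = M := mul_div_cancel₀ M (Nat.cast_ne_zero.2 hN.ne')
  have hA := tendsto_measure_biUnion_finset_nhds_zero (P := P) (Finset.range (N + 1))
    fun i _ => tendstoInMeasure_iff_dist.1 (hconv (i * h) (by positivity)) (ε / 3) hε3
  filter_upwards [hA.eventually_lt_const hδ3] with n hAn
  have hbad : {ω | ε ≤ ⨆ x : {x : ℝ // 0 ≤ x}, |F n x ω - G x ω|} ⊆
      (⋃ i ∈ Finset.range (N + 1), {ω | ε / 3 ≤ dist (F n (i * h) ω) (G (i * h) ω)}) ∪
      (⋃ i ∈ Finset.range N, {ω | ε / 3 ≤ |G ((i + 1) * h) ω - G (i * h) ω|}) ∪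
      {ω | ε / 3 ≤ 1 - G M ω} := by
    intro ω hω
    by_contra hgood
    simp only [mem_union, mem_iUnion, mem_ofPred_eq, Finset.mem_range, not_or, not_exists,
      not_le, Real.dist_eq] at hgood
    obtain ⟨⟨hD, hO⟩, hT⟩ := hgood
    have hsup : ⨆ x : {x : ℝ // 0 ≤ x}, |F n x ω - G x ω| ≤ ε / 3 + ε / 3 + (1 - G M ω) := by
      refine ciSup_le fun x => hNh ▸ abs_sub_le_of_grid (hFmono n ω) (hGmono ω)
        (fun x hx => (hFrange n x ω hx).2) (fun x hx => (hGrange x ω hx).2) (by positivity)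
        (fun i hi => (hD i (Nat.lt_succ_of_le hi)).le)
        (fun i hi => (le_abs_self _).trans (hO i hi).le) hε3.le x.2
    exact absurd (hω.trans hsup) (by linarith)
  calc _ ≤ _ := measure_mono hbad
    _ ≤ _ := (measure_union_le _ _).trans (add_le_add_left (measure_union_le _ _) _)
    _ ≤ δ / 3 + δ / 3 + δ / 3 := by gcongr
    _ = δ := ENNReal.add_thirds δ

/-- Uniformization lemma (concluding argument of Theorem 3.1): pointwise
convergence in probability of random monotone `[0,1]`-valued functions on `ℝ₊`
to an a.s. continuous, tight limit implies uniform convergence in probability. -/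
theorem monotone_pointwise_to_uniform_in_probability
    (Ω : Type*) [MeasurableSpace Ω] (P : Measure Ω) [IsProbabilityMeasure P]
    (F : ℕ → ℝ → Ω → ℝ) (G : ℝ → Ω → ℝ)
    (hFmeas : ∀ n, Measurable fun p : ℝ × Ω => F n p.1 p.2)
    (hGmeas : Measurable fun p : ℝ × Ω => G p.1 p.2)
    (hFrange : ∀ n x ω, 0 ≤ x → F n x ω ∈ Set.Icc (0:ℝ) 1)
    (hGrange : ∀ x ω, 0 ≤ x → G x ω ∈ Set.Icc (0:ℝ) 1)
    (hFmono : ∀ n ω, MonotoneOn (fun x => F n x ω) (Set.Ici (0:ℝ)))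
    (hGmono : ∀ ω, MonotoneOn (fun x => G x ω) (Set.Ici (0:ℝ)))
    (hconv : ∀ x ≥ (0:ℝ), TendstoInMeasure P (fun n => F n x) atTop (G x))
    (hcont : ∀ᵐ ω ∂P, ContinuousOn (fun x => G x ω) (Set.Ici (0:ℝ)))
    (htight : ∀ η > (0:ℝ), ∃ M > (0:ℝ),
      P {ω | η < 1 - G M ω} < ENNReal.ofReal η) :
    ∀ ε > 0,
      Tendsto
        (fun n => P {ω | ε ≤ ⨆ x : {x : ℝ // 0 ≤ x}, |F n x ω - G x ω|})
        atTop (nhds 0) :=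
  monotone_pointwise_to_uniform_in_probability_general Ω P F G hGmeas hFrange hGrange hFmono hGmono
    hconv hcont htight
end

section
/- Let (ε_i)_{i ≥ 0} be i.i.d. real random variables with E[ε_0] = 0, E[ε_0²] = 1, and E[ε_0⁴] < ∞, let ω ∈ ℝ, and set U_i = ω·ε_i. For integers h ≥ 2 define the noise-variance estimator ω̂²_h = −(1/(h−1))·Σ_{m=1}^{h−1} (U_{m+1} − U_m)(U_{m+2} − U_{m+1}). Then E[ω̂²_h] = ω² for every h ≥ 2, and ω̂²_h → ω² in L² (hence in probability) as h → ∞. -/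
/-!
Write `R m = (ε (m+1) - ε m) * (ε (m+2) - ε (m+1))`, so that the estimator for `U = w • ε` is
`-(w² / (h-1)) ∑ R m`. Expanding and using independence, `E[R m] = -E[ε (m+1)²] = -1`, which
gives unbiasedness. Each `R m + 1` is a function of the window `(ε m, ε (m+1), ε (m+2))`; all
windows have the same product law, so the `R m + 1` are identically distributed, and windows
three apart are independent, so `R m + 1` and `R m' + 1` are uncorrelated once `m' ≥ m + 3`.
Hence `E[(∑_{m ∈ s} (R m + 1))²] ≤ 5 |s| E[(R 0 + 1)²]`, finite by the fourth-moment
assumption, and the mean squared error is `O(1/h)`. Chebyshev's inequality turns this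
`L²` convergence into convergence in measure.
-/

open MeasureTheory ProbabilityTheory Filter

open scoped Topology ENNReal

section General

variable {Ω : Type*} [MeasurableSpace Ω] {P : Measure Ω}

theorem tendstoInMeasure_of_tendsto_integral_sq {ι : Type*} {l : Filter ι} [IsFiniteMeasure P]
    {f : ι → Ω → ℝ} {g : Ω → ℝ} (hint : ∀ᶠ i in l, Integrable (fun ω => (f i ω - g ω) ^ 2) P)
    (hlim : Tendsto (fun i => ∫ ω, (f i ω - g ω) ^ 2 ∂P) l (𝓝 0)) :
    TendstoInMeasure P f l g := by
  rw [tendstoInMeasure_iff_dist]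
  intro δ hδ
  have hchebyshev : ∀ᶠ i in l,
      P {ω | δ ≤ dist (f i ω) (g ω)} ≤ ENNReal.ofReal ((∫ ω, (f i ω - g ω) ^ 2 ∂P) / δ ^ 2) := by
    filter_upwards [hint] with i hi
    have hsub : {ω | δ ≤ dist (f i ω) (g ω)} ⊆ {ω | δ ^ 2 ≤ (f i ω - g ω) ^ 2} := fun ω hω => by
      simpa [Real.dist_eq, sq_abs] using pow_le_pow_left₀ hδ.le hω 2
    have hmarkov := mul_meas_ge_le_integral_of_nonneg (ae_of_all _ fun ω => sq_nonneg _) hi (δ ^ 2)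
    calc P {ω | δ ≤ dist (f i ω) (g ω)} ≤ P {ω | δ ^ 2 ≤ (f i ω - g ω) ^ 2} := measure_mono hsub
      _ = ENNReal.ofReal (P.real {ω | δ ^ 2 ≤ (f i ω - g ω) ^ 2}) :=
        (ofReal_measureReal (measure_ne_top _ _)).symm
      _ ≤ _ := ENNReal.ofReal_le_ofReal <| by rw [le_div_iff₀ (by positivity)]; linarith
  refine tendsto_of_tendsto_of_tendsto_of_le_of_le' tendsto_const_nhds ?_
    (Eventually.of_forall fun _ => zero_le) hchebyshev
  simpa using ENNReal.tendsto_ofReal (hlim.div_const (δ ^ 2))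

theorem integral_mul_le_of_integral_sq_le {X Y : Ω → ℝ} {C : ℝ} (hX : MemLp X 2 P)
    (hY : MemLp Y 2 P) (hXC : ∫ ω, X ω ^ 2 ∂P ≤ C) (hYC : ∫ ω, Y ω ^ 2 ∂P ≤ C) :
    ∫ ω, X ω * Y ω ∂P ≤ C :=
  calc ∫ ω, X ω * Y ω ∂P ≤ ∫ ω, (X ω ^ 2 + Y ω ^ 2) / 2 ∂P :=
        integral_mono (hX.integrable_mul hY) ((hX.integrable_sq.add hY.integrable_sq).div_const 2)
          fun ω => by nlinarith [sq_nonneg (X ω - Y ω)]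
    _ = ((∫ ω, X ω ^ 2 ∂P) + ∫ ω, Y ω ^ 2 ∂P) / 2 := by
        rw [integral_div, integral_add hX.integrable_sq hY.integrable_sq]
    _ ≤ C := by linarith

theorem integral_sq_sum_le_of_integral_mul_eq_zero {Y : ℕ → Ω → ℝ} {k : ℕ} {C : ℝ}
    (hY : ∀ m, MemLp (Y m) 2 P) (hC : ∀ m, ∫ ω, Y m ω ^ 2 ∂P ≤ C)
    (hfar : ∀ m m', m + k < m' → ∫ ω, Y m ω * Y m' ω ∂P = 0) (s : Finset ℕ) :
    ∫ ω, (∑ m ∈ s, Y m ω) ^ 2 ∂P ≤ (2 * k + 1) * s.card * C := by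
  have hC0 : 0 ≤ C := (integral_nonneg fun ω => sq_nonneg (Y 0 ω)).trans (hC 0)
  have hprod : ∀ m m', Integrable (fun ω => Y m ω * Y m' ω) P := fun m m' =>
    (hY m).integrable_mul (hY m')
  have hrow : ∀ m, ∑ m' ∈ s, ∫ ω, Y m ω * Y m' ω ∂P ≤ (2 * k + 1) * C := by
    intro m
    have hnear : ∀ m' ∈ s, ∫ ω, Y m ω * Y m' ω ∂P
        ≤ if m' ∈ Finset.Icc (m - k) (m + k) then C else 0 := by
      intro m' _
      split_ifs with hm'
      · exact integral_mul_le_of_integral_sq_le (hY m) (hY m') (hC m) (hC m')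
      · rw [Finset.mem_Icc, not_and_or, not_le, not_le] at hm'
        rcases hm' with hlt | hlt
        · simp_rw [mul_comm (Y m _)]
          exact (hfar m' m (by omega)).le
        · exact (hfar m m' hlt).le
    calc ∑ m' ∈ s, ∫ ω, Y m ω * Y m' ω ∂P
        ≤ ∑ m' ∈ s, if m' ∈ Finset.Icc (m - k) (m + k) then C else 0 := Finset.sum_le_sum hnear
      _ = (s.filter (· ∈ Finset.Icc (m - k) (m + k))).card * C := by
        rw [← Finset.sum_filter, Finset.sum_const, nsmul_eq_mul]
      _ ≤ (2 * k + 1) * C := by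
        gcongr
        calc ((s.filter (· ∈ Finset.Icc (m - k) (m + k))).card : ℝ)
            ≤ (Finset.Icc (m - k) (m + k)).card := by
              exact_mod_cast Finset.card_le_card fun x hx => (Finset.mem_filter.mp hx).2
          _ ≤ 2 * k + 1 := by rw [Nat.card_Icc]; norm_cast; omega
  calc ∫ ω, (∑ m ∈ s, Y m ω) ^ 2 ∂P = ∑ m ∈ s, ∑ m' ∈ s, ∫ ω, Y m ω * Y m' ω ∂P := by
        simp_rw [sq, Finset.sum_mul_sum]
        rw [integral_finsetSum _ fun m _ => integrable_finsetSum _ fun m' _ => hprod m m']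
        exact Finset.sum_congr rfl fun m _ => integral_finsetSum _ fun m' _ => hprod m m'
    _ ≤ ∑ _m ∈ s, (2 * k + 1) * C := Finset.sum_le_sum fun m _ => hrow m
    _ = (2 * k + 1) * s.card * C := by rw [Finset.sum_const, nsmul_eq_mul]; ring

theorem memLp_four_iff_integrable_pow {f : Ω → ℝ} (hf : AEStronglyMeasurable f P) :
    MemLp f 4 P ↔ Integrable (fun ω => f ω ^ 4) P := by
  rw [← integrable_norm_rpow_iff hf (by norm_num) (by norm_num)]
  simp [Even.pow_abs ⟨2, rfl⟩]

end General

section Window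

variable {Ω β : Type*} [MeasurableSpace Ω] [MeasurableSpace β] {P : Measure Ω} {ε : ℕ → Ω → β}

def window (ε : ℕ → Ω → β) (k m : ℕ) : Ω → Fin k → β := fun ω j => ε (m + j) ω

theorem measurable_window (hmeas : ∀ i, Measurable (ε i)) (k m : ℕ) :
    Measurable (window ε k m) :=
  measurable_pi_lambda _ fun j => hmeas (m + j)

theorem ProbabilityTheory.iIndepFun.identDistrib_window (hmeas : ∀ i, Measurable (ε i))
    (hindep : iIndepFun ε P) (hident : ∀ i, P.map (ε i) = P.map (ε 0)) (k m : ℕ) :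
    IdentDistrib (window ε k m) (window ε k 0) P P := by
  have hlaw : ∀ n, P.map (window ε k n) = Measure.pi fun _ => P.map (ε 0) := fun n => by
    have hinj : Function.Injective fun j : Fin k => n + (j : ℕ) := fun i j hij =>
      Fin.ext (Nat.add_left_cancel hij)
    exact ((hindep.precomp hinj).map_fun_eq_pi_map fun j => (hmeas _).aemeasurable).trans
      (congrArg Measure.pi (funext fun j => hident _))
  exact ⟨(measurable_window hmeas k m).aemeasurable, (measurable_window hmeas k 0).aemeasurable,
    (hlaw m).trans (hlaw 0).symm⟩

theorem ProbabilityTheory.iIndepFun.indepFun_window (hmeas : ∀ i, Measurable (ε i))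
    (hindep : iIndepFun ε P) {k m m' : ℕ} (hmm' : m + k ≤ m') :
    IndepFun (window ε k m) (window ε k m') P := by
  have hdisj : Disjoint (Finset.Ico m (m + k)) (Finset.Ico m' (m' + k)) :=
    Finset.disjoint_left.mpr fun i hi hi' => by simp only [Finset.mem_Ico] at hi hi'; omega
  have hrestrict : ∀ n, Measurable fun (v : Finset.Ico n (n + k) → β) (j : Fin k) =>
      v ⟨n + j, by simp⟩ := fun n => measurable_pi_lambda _ fun j => measurable_pi_apply _
  exact (hindep.indepFun_finset _ _ hdisj hmeas).comp (hrestrict m) (hrestrict m')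

end Window

section Estimator

variable {Ω : Type*}

theorem cast_card_Icc_one_sub_one (R : Type*) [Ring R] {h : ℕ} (hh : 1 ≤ h) :
    ((Finset.Icc 1 (h - 1)).card : R) = h - 1 := by
  rw [Nat.card_Icc, Nat.add_sub_cancel, Nat.cast_sub hh, Nat.cast_one]

def returnProduct (U : ℕ → Ω → ℝ) (m : ℕ) (ω : Ω) : ℝ :=
  (U (m + 1) ω - U m ω) * (U (m + 2) ω - U (m + 1) ω)

noncomputable def noiseVarianceEstimator (U : ℕ → Ω → ℝ) (h : ℕ) (ω : Ω) : ℝ :=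
  -(1 / ((h : ℝ) - 1)) * ∑ m ∈ Finset.Icc 1 (h - 1), returnProduct U m ω

theorem returnProduct_const_mul (U : ℕ → Ω → ℝ) (w : ℝ) (m : ℕ) (ω : Ω) :
    returnProduct (fun i ω => w * U i ω) m ω = w ^ 2 * returnProduct U m ω := by
  simp only [returnProduct]; ring

theorem noiseVarianceEstimator_const_mul_sub_sq (U : ℕ → Ω → ℝ) (w : ℝ) {h : ℕ} (hh : 2 ≤ h)
    (ω : Ω) : noiseVarianceEstimator (fun i ω => w * U i ω) h ω - w ^ 2
      = -(w ^ 2 / ((h : ℝ) - 1)) * ∑ m ∈ Finset.Icc 1 (h - 1), (returnProduct U m ω + 1) := by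
  have hcard := cast_card_Icc_one_sub_one ℝ (by omega : 1 ≤ h)
  have hpos : (h : ℝ) - 1 ≠ 0 := by
    have : (2 : ℝ) ≤ h := by exact_mod_cast hh
    linarith
  simp only [noiseVarianceEstimator, returnProduct_const_mul, Finset.sum_add_distrib,
    Finset.sum_const, nsmul_eq_mul, hcard, ← Finset.mul_sum]
  field_simp
  ring

theorem returnProduct_eq_comp_window (U : ℕ → Ω → ℝ) (m : ℕ) :
    returnProduct U m = (fun v : Fin 3 → ℝ => (v 1 - v 0) * (v 2 - v 1)) ∘ window U 3 m := by
  funext ω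
  simp [returnProduct, window]

end Estimator

section EstimatorMoments

variable {Ω : Type*} [MeasurableSpace Ω] {P : Measure Ω} {U : ℕ → Ω → ℝ}

theorem memLp_noiseVarianceEstimator (hR : ∀ m, MemLp (returnProduct U m) 2 P) (h : ℕ) :
    MemLp (noiseVarianceEstimator U h) 2 P :=
  (memLp_finsetSum _ fun m _ => hR m).const_mul _

theorem integral_noiseVarianceEstimator_const_mul [IsProbabilityMeasure P]
    (hR : ∀ m, Integrable (returnProduct U m) P) (hmean : ∀ m, ∫ ω, returnProduct U m ω ∂P = -1)
    (w : ℝ) {h : ℕ} (hh : 2 ≤ h) :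
    ∫ ω, noiseVarianceEstimator (fun i ω => w * U i ω) h ω ∂P = w ^ 2 := by
  have hR1 : ∀ m, Integrable (fun ω => returnProduct U m ω + 1) P := fun m =>
    (hR m).add (integrable_const 1)
  have hcentered : ∀ m, ∫ ω, (returnProduct U m ω + 1) ∂P = 0 := fun m => by
    rw [integral_add (hR m) (integrable_const 1), hmean m]; simp
  rw [integral_congr_ae (ae_of_all _ fun ω =>
      sub_eq_iff_eq_add.mp (noiseVarianceEstimator_const_mul_sub_sq U w hh ω)),
    integral_add ((integrable_finsetSum _ fun m _ => hR1 m).const_mul _) (integrable_const _),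
    integral_const_mul, integral_finsetSum _ fun m _ => hR1 m]
  simp [hcentered]

theorem integral_noiseVarianceEstimator_const_mul_sub_sq_le [IsFiniteMeasure P] {C : ℝ}
    (hR : ∀ m, MemLp (returnProduct U m) 2 P)
    (hC : ∀ m, ∫ ω, (returnProduct U m ω + 1) ^ 2 ∂P ≤ C)
    (hfar : ∀ m m', m + 2 < m' →
      ∫ ω, (returnProduct U m ω + 1) * (returnProduct U m' ω + 1) ∂P = 0)
    (w : ℝ) {h : ℕ} (hh : 2 ≤ h) :
    ∫ ω, (noiseVarianceEstimator (fun i ω => w * U i ω) h ω - w ^ 2) ^ 2 ∂P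
      ≤ 5 * w ^ 4 * C / ((h : ℝ) - 1) := by
  have hcard := cast_card_Icc_one_sub_one ℝ (by omega : 1 ≤ h)
  have hpos : 0 < (h : ℝ) - 1 := by
    have : (2 : ℝ) ≤ h := by exact_mod_cast hh
    linarith
  have hsum := integral_sq_sum_le_of_integral_mul_eq_zero
    (fun m => (hR m).add (memLp_const 1)) hC hfar (Finset.Icc 1 (h - 1))
  simp_rw [noiseVarianceEstimator_const_mul_sub_sq U w hh, mul_pow, neg_sq]
  rw [integral_const_mul]
  calc (w ^ 2 / ((h : ℝ) - 1)) ^ 2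
          * ∫ ω, (∑ m ∈ Finset.Icc 1 (h - 1), (returnProduct U m ω + 1)) ^ 2 ∂P
      ≤ (w ^ 2 / ((h : ℝ) - 1)) ^ 2 * ((2 * 2 + 1) * (h - 1) * C) := by
        rw [← hcard]; gcongr; exact_mod_cast hsum
    _ = 5 * w ^ 4 * C / ((h : ℝ) - 1) := by field_simp; ring

theorem tendsto_integral_noiseVarianceEstimator_const_mul_sub_sq [IsFiniteMeasure P] {C : ℝ}
    (hR : ∀ m, MemLp (returnProduct U m) 2 P)
    (hC : ∀ m, ∫ ω, (returnProduct U m ω + 1) ^ 2 ∂P ≤ C)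
    (hfar : ∀ m m', m + 2 < m' →
      ∫ ω, (returnProduct U m ω + 1) * (returnProduct U m' ω + 1) ∂P = 0) (w : ℝ) :
    Tendsto (fun h : ℕ => ∫ ω, (noiseVarianceEstimator (fun i ω => w * U i ω) h ω - w ^ 2) ^ 2 ∂P)
      atTop (𝓝 0) := by
  have hrate : Tendsto (fun h : ℕ => 5 * w ^ 4 * C / ((h : ℝ) - 1)) atTop (𝓝 0) :=
    tendsto_const_nhds.div_atTop (tendsto_atTop_add_const_right _ (-1) tendsto_natCast_atTop_atTop)
  refine tendsto_of_tendsto_of_tendsto_of_le_of_le' tendsto_const_nhds hrate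
    (Eventually.of_forall fun h => integral_nonneg fun ω => sq_nonneg _) ?_
  filter_upwards [eventually_ge_atTop 2] with h hh
  exact integral_noiseVarianceEstimator_const_mul_sub_sq_le hR hC hfar w hh

end EstimatorMoments

instance ENNReal.holderTriple_four_four_two : ENNReal.HolderTriple 4 4 2 := ⟨by
  rw [← two_mul, show (4 : ℝ≥0∞) = 2 * 2 by norm_num, ENNReal.mul_inv (by simp) (by simp),
    ← mul_assoc, ENNReal.mul_inv_cancel (by simp) (by simp), one_mul]⟩

section IIDNoise

variable {Ω : Type*} [MeasurableSpace Ω] {P : Measure Ω} {ε : ℕ → Ω → ℝ}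

theorem memLp_returnProduct (h4 : ∀ i, MemLp (ε i) 4 P) (m : ℕ) :
    MemLp (returnProduct ε m) 2 P :=
  ((h4 (m + 2)).sub (h4 (m + 1))).mul ((h4 (m + 1)).sub (h4 m))

theorem ProbabilityTheory.iIndepFun.identDistrib_returnProduct (hmeas : ∀ i, Measurable (ε i))
    (hindep : iIndepFun ε P) (hident : ∀ i, P.map (ε i) = P.map (ε 0)) (m : ℕ) :
    IdentDistrib (returnProduct ε m) (returnProduct ε 0) P P := by
  rw [returnProduct_eq_comp_window, returnProduct_eq_comp_window]
  exact (hindep.identDistrib_window hmeas hident 3 m).comp (by fun_prop)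

theorem ProbabilityTheory.iIndepFun.indepFun_returnProduct (hmeas : ∀ i, Measurable (ε i))
    (hindep : iIndepFun ε P) {m m' : ℕ} (hmm' : m + 3 ≤ m') :
    IndepFun (returnProduct ε m) (returnProduct ε m') P := by
  rw [returnProduct_eq_comp_window, returnProduct_eq_comp_window]
  exact (hindep.indepFun_window hmeas hmm').comp (by fun_prop) (by fun_prop)

theorem ProbabilityTheory.iIndepFun.integral_returnProduct (hindep : iIndepFun ε P)
    (h2 : ∀ i, MemLp (ε i) 2 P) (hmean : ∀ i, ∫ ω, ε i ω ∂P = 0) (hvar : ∀ i, ∫ ω, ε i ω ^ 2 ∂P = 1) (m : ℕ) :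
    ∫ ω, returnProduct ε m ω ∂P = -1 := by
  have := hindep.isProbabilityMeasure
  have hint : ∀ i j, i ≠ j → Integrable (fun ω => ε i ω * ε j ω) P := fun i j hij =>
    (hindep.indepFun hij).integrable_mul ((h2 i).integrable one_le_two)
      ((h2 j).integrable one_le_two)
  have hcross : ∀ i j, i ≠ j → ∫ ω, ε i ω * ε j ω ∂P = 0 := fun i j hij => by
    simpa [hmean i] using (hindep.indepFun hij).integral_mul_eq_mul_integral
      (h2 i).aestronglyMeasurable (h2 j).aestronglyMeasurable
  have hexpand : ∀ ω, returnProduct ε m ω = ε (m + 1) ω * ε (m + 2) ω - ε (m + 1) ω ^ 2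
      - ε m ω * ε (m + 2) ω + ε m ω * ε (m + 1) ω := fun ω => by
    simp only [returnProduct]; ring
  have h12 := hint (m + 1) (m + 2) (by omega)
  have h02 := hint m (m + 2) (by omega)
  have h01 := hint m (m + 1) (by omega)
  have hsq := (h2 (m + 1)).integrable_sq
  simp_rw [hexpand]
  rw [integral_add ?_ h01, integral_sub ?_ h02, integral_sub h12 hsq, hcross _ _ (by omega), hvar,
    hcross _ _ (by omega), hcross _ _ (by omega)]
  · ring
  · exact h12.sub hsq
  · exact (h12.sub hsq).sub h02

theorem ProbabilityTheory.iIndepFun.integral_returnProduct_add_one_mul_eq_zero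
    (hmeas : ∀ i, Measurable (ε i)) (hindep : iIndepFun ε P)
    (hR : ∀ m, Integrable (returnProduct ε m) P) (hmean : ∀ m, ∫ ω, returnProduct ε m ω ∂P = -1)
    {m m' : ℕ} (hmm' : m + 2 < m') :
    ∫ ω, (returnProduct ε m ω + 1) * (returnProduct ε m' ω + 1) ∂P = 0 := by
  have := hindep.isProbabilityMeasure
  have hcentered : ∀ n, ∫ ω, (returnProduct ε n ω + 1) ∂P = 0 := fun n => by
    rw [integral_add (hR n) (integrable_const 1), hmean n]; simp
  have hindep' := (hindep.indepFun_returnProduct hmeas (show m + 3 ≤ m' by omega)).comp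
    (measurable_add_const (1 : ℝ)) (measurable_add_const (1 : ℝ))
  simpa [Function.comp_def, hcentered] using hindep'.integral_mul_eq_mul_integral
    ((hR m).add (integrable_const 1)).aestronglyMeasurable
    ((hR m').add (integrable_const 1)).aestronglyMeasurable

end IIDNoise

/-- Exact unbiasedness and L² consistency of the noise-variance estimator
(equation (16) of the paper) in the i.i.d.-noise case: with `U_i = ω·ε_i`,
the negative first-order sample autocovariance of the returns
`ΔU_m = U_{m+1} − U_m` has mean `ω²` and converges to `ω²` in `L²`
(hence in probability) as the block length grows. -/
theorem noise_variance_estimator_consistent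
    (Ω : Type*) [MeasurableSpace Ω] (P : Measure Ω) [IsProbabilityMeasure P]
    (ε : ℕ → Ω → ℝ)
    (hmeas : ∀ i, Measurable (ε i))
    (hindep : iIndepFun ε P)
    (hident : ∀ i, Measure.map (ε i) P = Measure.map (ε 0) P)
    (hmean : ∫ a, ε 0 a ∂P = 0)
    (hvar : ∫ a, (ε 0 a) ^ 2 ∂P = 1)
    (hmom4 : Integrable (fun a => (ε 0 a) ^ 4) P)
    (w : ℝ)
    (U : ℕ → Ω → ℝ) (hU : ∀ i a, U i a = w * ε i a)
    (est : ℕ → Ω → ℝ)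
    (hest : ∀ h a, est h a
      = -(1 / ((h : ℝ) - 1)) * ∑ m ∈ Finset.Icc 1 (h - 1),
          (U (m + 1) a - U m a) * (U (m + 2) a - U (m + 1) a)) :
    (∀ h : ℕ, 2 ≤ h → ∫ a, est h a ∂P = w ^ 2) ∧
    Tendsto (fun h : ℕ => ∫ a, (est h a - w ^ 2) ^ 2 ∂P) atTop (nhds 0) ∧
    TendstoInMeasure P est atTop (fun _ => w ^ 2) := by
  obtain rfl : U = fun i a => w * ε i a := funext fun i => funext (hU i)
  obtain rfl : est = noiseVarianceEstimator (fun i a => w * ε i a) :=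
    funext fun h => funext (hest h)
  have hident' : ∀ i, IdentDistrib (ε i) (ε 0) P P := fun i =>
    ⟨(hmeas i).aemeasurable, (hmeas 0).aemeasurable, hident i⟩
  have h4 : ∀ i, MemLp (ε i) 4 P := fun i => (hident' i).memLp_iff.mpr
    ((memLp_four_iff_integrable_pow (hmeas 0).aestronglyMeasurable).mpr hmom4)
  have hR : ∀ m, MemLp (returnProduct ε m) 2 P := memLp_returnProduct h4
  have hRmean : ∀ m, ∫ a, returnProduct ε m a ∂P = -1 :=
    hindep.integral_returnProduct (fun i => (h4 i).mono_exponent (by norm_num))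
      (fun i => (hident' i).integral_eq.trans hmean)
      (fun i => (hident' i).sq.integral_eq.trans hvar)
  have hRsq : ∀ m, ∫ a, (returnProduct ε m a + 1) ^ 2 ∂P ≤ ∫ a, (returnProduct ε 0 a + 1) ^ 2 ∂P :=
    fun m => ((hindep.identDistrib_returnProduct hmeas hident m).comp
      (by fun_prop : Measurable fun x : ℝ => (x + 1) ^ 2)).integral_eq.le
  have hfar := fun m m' (hmm' : m + 2 < m') => hindep.integral_returnProduct_add_one_mul_eq_zero
    hmeas (fun n => (hR n).integrable one_le_two) hRmean hmm'
  have hL2 := tendsto_integral_noiseVarianceEstimator_const_mul_sub_sq hR hRsq hfar w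
  refine ⟨fun h hh => integral_noiseVarianceEstimator_const_mul
    (fun m => (hR m).integrable one_le_two) hRmean w hh, hL2, ?_⟩
  refine tendstoInMeasure_of_tendsto_integral_sq (.of_forall fun h => ?_) hL2
  exact ((memLp_noiseVarianceEstimator (memLp_returnProduct fun i => (h4 i).const_mul w) h).sub
    (memLp_const _)).integrable_sq
end
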